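/- Let y* be a local minimizer of f(y) + λ‖y‖₀ over 𝒴 = {y ∈ ℝⁿ : −l ≤ y ≤ u}, and define x₊* = max(y*, 0) and x₋* = max(−y*, 0) (componentwise). Then (x₊*, x₋*) is a local minimizer of the function (x₊, x₋) ↦ f(x₊ − x₋) + λ‖x₊‖₀ + λ‖x₋‖₀ over X₁ × X₂, where X₁ = {x ∈ ℝⁿ : 0 ≤ x ≤ u} and X₂ = {x ∈ ℝⁿ : 0 ≤ x ≤ l}; moreover y* = x₊* − x₋*. -/

import Mathlib

open Filter Set
open scoped NNReal

/-- The spare-smoothing kernel θ(s,μ). -/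
noncomputable def phi (s μ : ℝ) : ℝ :=
  if s < μ / 3 then 3 / (2 * μ) * s
  else if s ≤ μ then -(9 / (8 * μ ^ 2)) * (s - μ) ^ 2 + 1
  else 1

/-- ∂θ/∂s(s,μ). -/
noncomputable def phiS (s μ : ℝ) : ℝ :=
  if s < μ / 3 then 3 / (2 * μ)
  else if s ≤ μ then 9 / (4 * μ ^ 2) * (μ - s)
  else 0

/-- ∂θ/∂μ(s,μ) (for s ≥ 0). -/
noncomputable def phiM (s μ : ℝ) : ℝ :=
  if 3 * s < μ then -(3 * s) / (2 * μ ^ 2)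
  else if s ≤ μ then -(9 * (μ - s) * s) / (4 * μ ^ 3)
  else 0

/-- Θ(x,μ) = Σ_i θ(x_i,μ). -/
noncomputable def Phi {n : ℕ} (x : EuclideanSpace ℝ (Fin n)) (μ : ℝ) : ℝ :=
  ∑ i, phi (x i) μ

/-- ∇ₓΘ(x,μ), the gradient of Θ(·,μ). -/
noncomputable def gradPhi {n : ℕ} (x : EuclideanSpace ℝ (Fin n)) (μ : ℝ) :
    EuclideanSpace ℝ (Fin n) := WithLp.toLp 2 (fun i => phiS (x i) μ)

/-- ‖x‖₀, the number of nonzero entries of x. -/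
noncomputable def norm0 {n : ℕ} (x : EuclideanSpace ℝ (Fin n)) : ℕ :=
  Nat.card {i // x i ≠ 0}

/-- μ(t) = (α₀/(t+1)^β + μ*)/2. -/
noncomputable def muFun (α₀ β μs t : ℝ) : ℝ := (α₀ / (t + 1) ^ β + μs) / 2

/-! The map `(x₊, x₋) ↦ x₊ - x₋` is continuous and sends `X₁ × X₂` into `𝒴`, and
`‖x₊ - x₋‖₀ ≤ ‖x₊‖₀ + ‖x₋‖₀`, with equality at `(x₊*, x₋*)` because these have disjoint
supports. So the split objective dominates the original one composed with this map and agrees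
with it at `(x₊*, x₋*)`, which inherits local minimality from `y* = x₊* - x₋*`. -/

lemma norm0_eq_ncard {n : ℕ} (x : EuclideanSpace ℝ (Fin n)) :
    norm0 x = {i | x i ≠ 0}.ncard :=
  Nat.card_coe_set_eq _

lemma norm0_sub_le {n : ℕ} (a b : EuclideanSpace ℝ (Fin n)) :
    norm0 (a - b) ≤ norm0 a + norm0 b := by
  simp only [norm0_eq_ncard]
  refine (Set.ncard_le_ncard (fun i hi => ?_) (Set.toFinite _)).trans (Set.ncard_union_le _ _)
  by_contra h
  simp only [Set.mem_union, Set.mem_ofPred_eq, not_or, not_not] at h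
  exact hi (by simp [h.1, h.2])

lemma norm0_sub_of_disjoint {n : ℕ} {a b : EuclideanSpace ℝ (Fin n)}
    (hab : ∀ i, a i = 0 ∨ b i = 0) : norm0 (a - b) = norm0 a + norm0 b := by
  simp only [norm0_eq_ncard]
  rw [← Set.ncard_union_eq _ (Set.toFinite _) (Set.toFinite _)]
  · congr 1
    ext i
    rcases hab i with h | h <;> simp [h]
  · exact Set.disjoint_left.2 fun i ha hb => (hab i).elim ha hb

theorem IsLocalMinOn.of_comp_le {X Y β : Type*} [TopologicalSpace X] [TopologicalSpace Y]
    [Preorder β] {g : Y → β} {h : X → β} {φ : X → Y} {s : Set X} {t : Set Y} {a : X}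
    (hg : IsLocalMinOn g t (φ a)) (hφ : ContinuousWithinAt φ s a) (hst : MapsTo φ s t)
    (hle : ∀ x, g (φ x) ≤ h x) (heq : h a = g (φ a)) : IsLocalMinOn h s a := by
  filter_upwards [hg.comp_tendsto (hφ.tendsto_nhdsWithin hst)] with x hx
  exact heq.trans_le (hx.trans (hle x))

theorem stmt19_general {n : ℕ} (l u : EuclideanSpace ℝ (Fin n))
    (lam : ℝ) (hlam : 0 < lam)
    (f : EuclideanSpace ℝ (Fin n) → ℝ)
    (ystar : EuclideanSpace ℝ (Fin n))
    (hmin : IsLocalMinOn (fun y => f y + lam * (norm0 y : ℝ))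
      {y : EuclideanSpace ℝ (Fin n) | ∀ i, -l i ≤ y i ∧ y i ≤ u i} ystar)
    (xp xm : EuclideanSpace ℝ (Fin n))
    (hxp : ∀ i, xp i = max (ystar i) 0) (hxm : ∀ i, xm i = max (-ystar i) 0) :
    ystar = xp - xm ∧
    IsLocalMinOn
      (fun p : EuclideanSpace ℝ (Fin n) × EuclideanSpace ℝ (Fin n) =>
        f (p.1 - p.2) + lam * (norm0 p.1 : ℝ) + lam * (norm0 p.2 : ℝ))
      ({x : EuclideanSpace ℝ (Fin n) | ∀ i, 0 ≤ x i ∧ x i ≤ u i} ×ˢ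
        {x : EuclideanSpace ℝ (Fin n) | ∀ i, 0 ≤ x i ∧ x i ≤ l i})
      (xp, xm) := by
  have hy : ystar = xp - xm := by
    ext i
    simp [hxp, hxm]
  have hdisj : ∀ i, xp i = 0 ∨ xm i = 0 := fun i => by
    rcases le_total (ystar i) 0 with h | h
    · exact .inl (by simp [hxp, h])
    · exact .inr (by simp [hxm, h])
  rw [hy] at hmin
  refine ⟨hy, hmin.of_comp_le (φ := fun p => p.1 - p.2)
    (continuous_fst.sub continuous_snd).continuousWithinAt ?_ (fun p => ?_) ?_⟩
  · rintro ⟨a, b⟩ ⟨ha, hb⟩ i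
    constructor <;> simp only [PiLp.sub_apply] <;> linarith [ha i, hb i]
  · have : (norm0 (p.1 - p.2) : ℝ) ≤ norm0 p.1 + norm0 p.2 := mod_cast norm0_sub_le p.1 p.2
    beta_reduce
    linarith [mul_le_mul_of_nonneg_left this hlam.le]
  · rw [norm0_sub_of_disjoint hdisj]
    push_cast
    ring

theorem stmt19 {n : ℕ} (l u : EuclideanSpace ℝ (Fin n))
    (hl : ∀ i, 0 ≤ l i) (hu : ∀ i, 0 ≤ u i)
    (lam : ℝ) (hlam : 0 < lam)
    (f : EuclideanSpace ℝ (Fin n) → ℝ) (hf : Continuous f)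
    (ystar : EuclideanSpace ℝ (Fin n))
    (hys : ystar ∈ {y : EuclideanSpace ℝ (Fin n) | ∀ i, -l i ≤ y i ∧ y i ≤ u i})
    (hmin : IsLocalMinOn (fun y => f y + lam * (norm0 y : ℝ))
      {y : EuclideanSpace ℝ (Fin n) | ∀ i, -l i ≤ y i ∧ y i ≤ u i} ystar)
    (xp xm : EuclideanSpace ℝ (Fin n))
    (hxp : ∀ i, xp i = max (ystar i) 0) (hxm : ∀ i, xm i = max (-ystar i) 0) :
    ystar = xp - xm ∧
    IsLocalMinOn
      (fun p : EuclideanSpace ℝ (Fin n) × EuclideanSpace ℝ (Fin n) =>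
        f (p.1 - p.2) + lam * (norm0 p.1 : ℝ) + lam * (norm0 p.2 : ℝ))
      ({x : EuclideanSpace ℝ (Fin n) | ∀ i, 0 ≤ x i ∧ x i ≤ u i} ×ˢ
        {x : EuclideanSpace ℝ (Fin n) | ∀ i, 0 ≤ x i ∧ x i ≤ l i})
      (xp, xm) :=
  stmt19_general l u lam hlam f ystar hmin xp xm hxp hxm
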